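/- Let F : EuclideanSpace ℝ (Fin n) → H be Lipschitz with constant L_F ≥ 0, where H is a real normed space. Let x, a ∈ EuclideanSpace ℝ (Fin n), let B_X ≥ 0 with |x(i)| ≤ B_X for all i, let |a(i)| ≤ 1 for all i, and let δ ≥ 0. Define x̃(i) := x(i) · exp(δ · a(i)). Then ‖F(x̃) − F(x)‖ ≤ δ · exp(δ) · L_F · B_X · ‖a‖. In particular, for δ ≤ 1 the prediction drift is at most δ · e · L_F · B_X · ‖a‖, i.e., of order O(δ). -/

import Mathlib

/-! Coordinatewise, `|x i (exp (δ a i) - 1)| ≤ B |δ a i| exp |δ a i| ≤ δ exp δ B |a i|`, so the edit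
moves the input by at most `δ exp δ B ‖a‖` in the Euclidean norm, and the Lipschitz bound on `F`
turns this into the drift bound. -/

open Real

lemma Real.abs_exp_sub_one_le_abs_mul_exp_abs (t : ℝ) : |exp t - 1| ≤ |t| * exp |t| := by
  have h := Complex.norm_exp_sub_sum_le_norm_mul_exp (t : ℂ) 1
  simp only [Finset.range_one, Finset.sum_singleton, pow_zero, Nat.factorial_zero, Nat.cast_one,
    div_one, pow_one, Complex.norm_real, Real.norm_eq_abs] at h
  exact_mod_cast h

lemma abs_mul_exp_sub_self_le {x a δ B : ℝ} (hx : |x| ≤ B) (ha : |a| ≤ 1) (hδ : 0 ≤ δ) :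
    |x * exp (δ * a) - x| ≤ δ * exp δ * B * |a| := by
  have hδa : |δ * a| = δ * |a| := by rw [abs_mul, abs_of_nonneg hδ]
  have hδa_le : |δ * a| ≤ δ := by rw [hδa]; exact mul_le_of_le_one_right hδ ha
  calc |x * exp (δ * a) - x| = |x| * |exp (δ * a) - 1| := by rw [← abs_mul, mul_sub_one]
    _ ≤ B * (δ * |a| * exp δ) := by
      gcongr
      · exact (abs_nonneg x).trans hx
      · rw [← hδa]
        exact (abs_exp_sub_one_le_abs_mul_exp_abs _).trans (by gcongr)
    _ = δ * exp δ * B * |a| := by ring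

lemma EuclideanSpace.norm_le_norm_of_forall_norm_le {𝕜 ι : Type*} [RCLike 𝕜] [Fintype ι]
    {v w : EuclideanSpace 𝕜 ι} (h : ∀ i, ‖v i‖ ≤ ‖w i‖) : ‖v‖ ≤ ‖w‖ := by
  rw [EuclideanSpace.norm_eq, EuclideanSpace.norm_eq]
  gcongr with i
  exact h i

/-- drift bound for multiplicative input edits (Corollary 1).
For an `L_F`-Lipschitz forecaster `F` and the exponential-form edit
`x̃ i = x i · exp(δ · a i)` with `|x i| ≤ B_X` and `|a i| ≤ 1`,
`‖F(x̃) − F(x)‖ ≤ δ e^δ L_F B_X ‖a‖`, and for `δ ≤ 1` the drift is at most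
`δ · e · L_F · B_X · ‖a‖`, i.e. `O(δ)`. -/
theorem multiplicative_input_drift_bound
    {n : ℕ} {H : Type*} [NormedAddCommGroup H] [NormedSpace ℝ H]
    (F : EuclideanSpace ℝ (Fin n) → H)
    (L : ℝ) (hL : 0 ≤ L) (hLip : ∀ a b, ‖F a - F b‖ ≤ L * ‖a - b‖)
    (x a xt : EuclideanSpace ℝ (Fin n))
    (B : ℝ) (hB : 0 ≤ B) (hx : ∀ i, |x i| ≤ B) (ha : ∀ i, |a i| ≤ 1)
    (δ : ℝ) (hδ : 0 ≤ δ)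
    (hxt : ∀ i, xt i = x i * Real.exp (δ * a i)) :
    ‖F xt - F x‖ ≤ δ * Real.exp δ * L * B * ‖a‖
    ∧ (δ ≤ 1 → ‖F xt - F x‖ ≤ δ * Real.exp 1 * L * B * ‖a‖) := by
  have hedit : ‖xt - x‖ ≤ δ * exp δ * B * ‖a‖ := by
    calc ‖xt - x‖ ≤ ‖(δ * exp δ * B) • a‖ := by
          refine EuclideanSpace.norm_le_norm_of_forall_norm_le fun i => ?_
          rw [PiLp.sub_apply, PiLp.smul_apply, hxt i, smul_eq_mul, Real.norm_eq_abs,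
            Real.norm_eq_abs, abs_mul, abs_of_nonneg (by positivity : 0 ≤ δ * exp δ * B)]
          exact abs_mul_exp_sub_self_le (hx i) (ha i) hδ
      _ = δ * exp δ * B * ‖a‖ := by rw [norm_smul, Real.norm_of_nonneg (by positivity)]
  have hdrift : ‖F xt - F x‖ ≤ δ * exp δ * L * B * ‖a‖ :=
    calc ‖F xt - F x‖ ≤ L * ‖xt - x‖ := hLip xt x
      _ ≤ L * (δ * exp δ * B * ‖a‖) := by gcongr
      _ = δ * exp δ * L * B * ‖a‖ := by ring
  exact ⟨hdrift, fun hδ1 => hdrift.trans (by gcongr)⟩
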